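/- Let a > 0 and α₀, β₀ : [0,∞) → ℝ. Define M^{[s,t]} for 0 ≤ s < t < a as the 3×3×3 cubic matrix with P_{000} = P_{002} = 1, P_{101} = α₀(s), P_{111} = β₀(s), P_{121} = 1 − α₀(s) − β₀(s), and all other entries 0; and for t ≥ a as the matrix with P_{000} = P_{001} = P_{002} = 1 and all other entries 0. Then this family is (1,2)-stochastic for all 0 ≤ s < t and satisfies the cubic Kolmogorov–Chapman equation P^{[s,t]}_{ijr} = Σ_{k,n=0}^2 P^{[s,τ]}_{ijk} P^{[τ,t]}_{knr} for all 0 ≤ s < τ < t, if and only if α₀(s) ≥ 0, β₀(s) ≥ 0 and α₀(s) + β₀(s) ≤ 1 for all s with 0 ≤ s < a. -/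
import Mathlib


/-- The 3×3×3 cubic matrix family from the twin-birth population model,
case (c): a cataclysm at time `a`. -/
noncomputable def Mcat (a : ℝ) (α₀ β₀ : ℝ → ℝ) (s t : ℝ) :
    Fin 3 → Fin 3 → Fin 3 → ℝ :=
  if t < a then
    ![![![(1 : ℝ), 0, 1], ![0, 0, 0], ![0, 0, 0]],
      ![![0, α₀ s, 0], ![0, β₀ s, 0], ![0, 1 - α₀ s - β₀ s, 0]],
      ![![0, 0, 0], ![0, 0, 0], ![0, 0, 0]]]
  else
    fun i j k => if i = 0 ∧ j = 0 then 1 else 0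

/-- Mcat is a QSP of type (12|a₀) iff α₀, β₀ are nonnegative with sum at most 1
on [0, a). -/
theorem Mcat_QSP_iff (a : ℝ) (ha : 0 < a) (α₀ β₀ : ℝ → ℝ) :
    ((∀ s t : ℝ, 0 ≤ s → s < t →
        (∀ i j k, 0 ≤ Mcat a α₀ β₀ s t i j k) ∧
        (∀ k, ∑ i, ∑ j, Mcat a α₀ β₀ s t i j k = 1)) ∧
      (∀ s τ t : ℝ, 0 ≤ s → s < τ → τ < t → ∀ i j r,
        Mcat a α₀ β₀ s t i j r =
          ∑ k, ∑ n, Mcat a α₀ β₀ s τ i j k * Mcat a α₀ β₀ τ t k n r)) ↔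
      (∀ s : ℝ, 0 ≤ s → s < a → 0 ≤ α₀ s ∧ 0 ≤ β₀ s ∧ α₀ s + β₀ s ≤ 1) := by

  constructor
  · rintro ⟨hst, -⟩ s hs hsa
    set t := (s + a) / 2 with ht
    have hst' : s < t := by rw [ht]; linarith
    have hta : t < a := by rw [ht]; linarith
    obtain ⟨hnn, -⟩ := hst s t hs hst'
    have h1 := hnn 1 0 1
    have h2 := hnn 1 1 1
    have h3 := hnn 1 2 1
    simp [Mcat, hta] at h1 h2 h3
    exact ⟨h1, h2, by linarith⟩
  · intro h
    constructor
    · intro s t hs hst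
      by_cases hta : t < a
      · have hc := h s hs (hst.trans hta)
        constructor
        · intro i j k
          fin_cases i <;> fin_cases j <;> fin_cases k <;>
            simp [Mcat, hta, Matrix.vecHead, Matrix.vecTail] <;> linarith [hc.1, hc.2.1, hc.2.2]
        · intro k
          fin_cases k <;> simp [Mcat, hta, Fin.sum_univ_three, Matrix.vecHead, Matrix.vecTail] <;> ring
      · constructor
        · intro i j k
          simp only [Mcat, if_neg hta]
          split <;> norm_num
        · intro k
          simp [Mcat, hta, Fin.sum_univ_three, Finset.filter_eq']
    · intro s τ t hs hsτ hτt i j r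
      by_cases hτa : τ < a
      · by_cases hta : t < a
        · fin_cases i <;> fin_cases j <;> fin_cases r <;>
            simp [Mcat, hτa, hta, Fin.sum_univ_three, Matrix.vecHead, Matrix.vecTail] <;> ring
        · fin_cases i <;> fin_cases j <;> fin_cases r <;>
            simp [Mcat, hτa, hta, Fin.sum_univ_three, Matrix.vecHead, Matrix.vecTail, Finset.filter_eq']
      · have hta : ¬ t < a := fun h' => hτa (hτt.trans h')
        fin_cases i <;> fin_cases j <;> fin_cases r <;>
          simp [Mcat, hτa, hta, Fin.sum_univ_three, Matrix.vecHead, Matrix.vecTail, Finset.filter_eq']
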